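/- Let ℱ be a functional shift and let 𝙵 = {x ∈ A^* : D_ℱ(0, x) = ∅}, i.e., the set of blocks x for which no block f ∈ B_{|x|-1}(ℱ) satisfies x_{i+1} = f_i(x_i) for all i. Then X_𝙵 = X_ℱ: a bi-infinite sequence lies in the generated shift if and only if no block of 𝙵 occurs in it. -/
import Mathlib


namespace FS

/-- The block `w` occurs (as a consecutive subword) in the bi-infinite sequence `x`. -/
def occursIn {A : Type} (w : List A) (x : ℤ → A) : Prop :=
  ∃ k : ℤ, ∀ i : Fin w.length, x (k + (i : ℕ)) = w.get i

/-- The set of bi-infinite sequences avoiding every block of `Fb`. -/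
def shiftOf {A : Type} (Fb : Set (List A)) : Set (ℤ → A) :=
  {x | ∀ w ∈ Fb, ¬ occursIn w x}

/-- A shift space: a set of bi-infinite sequences described by forbidden blocks. -/
def IsShiftSpace {A : Type} (X : Set (ℤ → A)) : Prop :=
  ∃ Fb : Set (List A), X = shiftOf Fb

/-- The generated shift of a functional shift `ℱ`. -/
def generated {A : Type} (ℱ : Set (ℤ → (A → A))) : Set (ℤ → A) :=
  {x | ∃ f ∈ ℱ, ∀ i : ℤ, x (i + 1) = f i (x i)}

/-- The language of a set of bi-infinite sequences: all blocks occurring in its points. -/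
def lang {A : Type} (X : Set (ℤ → A)) : Set (List A) :=
  {w | ∃ x ∈ X, occursIn w x}

/-- The `n`-blocks occurring in points of `X`. -/
def blocksN {A : Type} (X : Set (ℤ → A)) (n : ℕ) : Set (List A) :=
  {w | w ∈ lang X ∧ w.length = n}

/-- The block of functions `f` (of length `|y| - 1`) chains the block `y` together:
`y (i+1) = f i (y i)` for all applicable `i`. -/
def chains {A : Type} (f : List (A → A)) (y : List A) : Prop :=
  f.length = y.length - 1 ∧ ∀ i : ℕ, y[i + 1]? = (f[i]?).bind fun g => (y[i]?).map g

/-- `D_ℱ(n, x)`: the set of blocks `y = a ++ x` with `|a| = n` that are chained together by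
some block of `ℱ` of length `|y| - 1`. -/
def Dset {A : Type} (ℱ : Set (ℤ → (A → A))) (n : ℕ) (x : List A) : Set (List A) :=
  {y | ∃ a : List A, a.length = n ∧ y = a ++ x ∧
    ∃ f ∈ blocksN ℱ (y.length - 1), chains f y}

-- shift invariance of shiftOf
theorem shift_mem_shiftOf {A : Type} {Fb : Set (List A)} {g : ℤ → A} (hg : g ∈ shiftOf Fb)
    (c : ℤ) : (fun j => g (j + c)) ∈ shiftOf Fb := by
  rintro w hw ⟨k, hk⟩
  exact hg w hw ⟨k + c, fun i => by
    have := hk i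
    simpa [add_right_comm] using this⟩

-- easy direction
theorem generated_subset {A : Type} (ℱ : Set (ℤ → (A → A))) :
    generated ℱ ⊆ shiftOf {x : List A | Dset ℱ 0 x = ∅} := by
  rintro x ⟨f0, hf0, hchain⟩ w hw ⟨k, hk⟩
  rw [Set.mem_setOf_eq, Set.eq_empty_iff_forall_notMem] at hw
  apply hw w
  refine ⟨[], rfl, (List.nil_append w).symm, (List.range (w.length - 1)).map (fun i : ℕ => f0 (k + (i:ℤ))), ⟨⟨f0, hf0, k, ?_⟩, by simp⟩, by simp, ?_⟩
  · intro i
    simp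
  · intro i
    rcases Nat.lt_or_ge (i+1) w.length with h | h
    · have hi : i < w.length := Nat.lt_of_succ_lt h
      have hi' : i < w.length - 1 := by omega
      have e1 : w[i+1]? = some w[i+1] := List.getElem?_eq_getElem h
      have e2 : w[i]? = some w[i] := List.getElem?_eq_getElem hi
      have hkk : ∀ m : ℕ, (hm : m < w.length) → w[m] = x (k + m) := by
        intro m hm; exact (hk ⟨m, hm⟩).symm
      rw [e1, e2]
      have e3 : ((List.range (w.length - 1)).map (fun i : ℕ => f0 (k + (i:ℤ))))[i]? = some (f0 (k + i)) := by
        simp [List.getElem?_map, List.getElem?_range, hi']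
      rw [e3]
      simp only [Option.bind_some, Option.map_some]
      rw [hkk _ h, hkk _ hi]
      have := hchain (k + i)
      push_cast
      rw [add_assoc] at this
      exact congrArg some this
    · have e1 : w[i+1]? = none := List.getElem?_eq_none h
      have e3 : ((List.range (w.length - 1)).map (fun i : ℕ => f0 (k + (i:ℤ))))[i]? = none := by
        apply List.getElem?_eq_none
        simp; omega
      rw [e1, e3]; rfl

theorem window_exists {A : Type} (ℱ : Set (ℤ → (A → A))) (Fb : Set (List (A → A)))
    (hFb : ℱ = shiftOf Fb) (x : ℤ → A)
    (hx : x ∈ shiftOf {x : List A | Dset ℱ 0 x = ∅}) (n : ℕ) :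
    ∃ h ∈ ℱ, ∀ j : ℤ, -(n:ℤ) ≤ j → j < n → x (j + 1) = h j (x j) := by
  set w : List A := (List.range (2*n+1)).map (fun i : ℕ => x (-(n:ℤ) + (i:ℤ))) with hwdef
  have hlen : w.length = 2*n+1 := by simp [hwdef]
  have hocc : occursIn w x := ⟨-(n:ℤ), fun i => by simp [hwdef]⟩
  have hne : Dset ℱ 0 w ≠ ∅ := fun hD => hx w hD hocc
  obtain ⟨y, a, ha, hy, f, ⟨⟨g, hg, kg, hoccf⟩, hflen⟩, hch⟩ :=
    Set.nonempty_iff_ne_empty.mpr hne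
  rw [List.length_eq_zero_iff.mp ha, List.nil_append] at hy
  subst hy
  have hflen' : f.length = 2*n := by rw [hflen, hlen]; omega
  refine ⟨fun j => g (j + (kg + n)), ?_, ?_⟩
  · rw [hFb]; exact shift_mem_shiftOf (hFb ▸ hg) _
  · intro j hj1 hj2
    set i : ℕ := (j + n).toNat with hidef
    have hji : (i:ℤ) = j + n := Int.toNat_of_nonneg (by omega)
    have hi1 : i + 1 < w.length := by rw [hlen]; omega
    have hi0 : i < w.length := by omega
    have hif : i < f.length := by rw [hflen']; omega
    have e1 : w[i+1]? = some (x (-(n:ℤ) + ((i:ℕ)+1 : ℕ))) := by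
      rw [List.getElem?_eq_getElem hi1]
      simp [hwdef, List.getElem_map]
    have e2 : w[i]? = some (x (-(n:ℤ) + (i:ℤ))) := by
      rw [List.getElem?_eq_getElem hi0]
      simp [hwdef, List.getElem_map]
    have e3 : f[i]? = some (g (kg + (i:ℤ))) := by
      rw [List.getElem?_eq_getElem hif]
      exact congrArg some (by simpa using (hoccf ⟨i, hif⟩).symm)
    have := hch.2 i
    rw [e1, e2, e3] at this
    simp only [Option.bind_some, Option.map_some, Option.some.injEq] at this
    have ej1 : j + 1 = -(n:ℤ) + ((i:ℕ)+1 : ℕ) := by push_cast; omega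
    have ej0 : j = -(n:ℤ) + (i:ℤ) := by omega
    have ej2 : j + (kg + n) = kg + (i:ℤ) := by omega
    calc x (j+1) = x (-(n:ℤ) + ((i:ℕ)+1 : ℕ)) := by rw [ej1]
    _ = g (kg + (i:ℤ)) (x (-(n:ℤ) + (i:ℤ))) := this
    _ = g (j + (kg + n)) (x j) := by rw [ej2, ← ej0]

/-- the collection `𝙵 = {x : D_ℱ(0, x) = ∅}` of forbidden blocks
describes exactly the generated shift: `X_𝙵 = X_ℱ`. -/
theorem shiftOf_forbidden_eq_generated {A : Type} [Fintype A] [Nonempty A]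
    (F : Set (A → A)) (hF : F.Finite) (ℱ : Set (ℤ → (A → A)))
    (hsub : ∀ g ∈ ℱ, ∀ i : ℤ, g i ∈ F) (hshift : IsShiftSpace ℱ) :
    shiftOf {x : List A | Dset ℱ 0 x = ∅} = generated ℱ := by
  apply Set.Subset.antisymm
  · obtain ⟨Fb, hFb⟩ := hshift
    intro x hx
    choose H hH1 hH2 using window_exists ℱ Fb hFb x hx
    set U : Ultrafilter ℕ := Ultrafilter.of Filter.atTop with hU
    have hUle : (U : Filter ℕ) ≤ Filter.atTop := Ultrafilter.of_le _
    have key : ∀ j : ℤ, ∃ c : A → A, {n | H n j = c} ∈ U := by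
      intro j
      have hfin : (Set.univ : Set (A → A)).Finite := Set.finite_univ
      have hmem : (⋃ c ∈ (Set.univ : Set (A → A)), {n | H n j = c}) ∈ U := by
        have he : (⋃ c ∈ (Set.univ : Set (A → A)), {n | H n j = c}) = Set.univ := by
          ext n; simp
        rw [he]; exact Filter.univ_mem
      obtain ⟨c, _, hc⟩ := (Ultrafilter.finite_biUnion_mem_iff hfin).mp hmem
      exact ⟨c, hc⟩
    choose h hh using key
    refine ⟨h, ?_, ?_⟩
    · rw [hFb]
      rintro w hw ⟨k, hk⟩
      have hS : (⋂ i : Fin w.length, {n | H n (k + (i:ℕ)) = h (k + (i:ℕ))}) ∈ U :=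
        Filter.iInter_mem.mpr fun i => hh _
      obtain ⟨n, hn⟩ := Filter.nonempty_of_mem hS
      have hocc : occursIn w (H n) :=
        ⟨k, fun i => (Set.mem_iInter.mp hn i).trans (hk i)⟩
      exact (hFb ▸ hH1 n) w hw hocc
    · intro j
      have h2 : {n : ℕ | j.natAbs + 1 ≤ n} ∈ U := hUle (Filter.mem_atTop _)
      obtain ⟨n, hn1, hn2⟩ := Filter.nonempty_of_mem (Filter.inter_mem (hh j) h2)
      have hb1 : -(n:ℤ) ≤ j := by
        have := hn2; simp only [Set.mem_setOf_eq] at this; omega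
      have hb2 : j < n := by
        have := hn2; simp only [Set.mem_setOf_eq] at this; omega
      rw [hH2 n j hb1 hb2]
      exact congrArg (· (x j)) hn1
  · exact fun x hx => generated_subset ℱ hx

end FS
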